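/- The complete bipartite graph K₃,₃ admits a (2,2)-NZF: an orientation and an assignment φ : E(K₃,₃) → ℝ² satisfying Kirchhoff's law at each vertex such that ‖φ(e)‖ = 1 for every edge. In fact one may take all flow values among the three cube roots of unity viewed as vectors in ℝ². -/

import Mathlib

open scoped BigOperators

noncomputable section

/-- The vector `(x, y)` in the Euclidean plane `ℝ²`. -/
def vec2 (x y : ℝ) : EuclideanSpace ℝ (Fin 2) := (WithLp.equiv 2 (Fin 2 → ℝ)).symm ![x, y]

/-- `f` is a `d`-dimensional nowhere-zero `r`-flow ((r,d)-NZF) on the graph `G`.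
We encode an orientation together with a flow as a skew-symmetric function on ordered
pairs of vertices, supported on adjacent pairs, whose values (on edges) have Euclidean
norm in `[1, r-1]`, and which satisfies Kirchhoff's law at every vertex. -/
def IsNZF {V : Type} [Fintype V] (G : SimpleGraph V) (d : ℕ) (r : ℝ)
    (f : V → V → EuclideanSpace ℝ (Fin d)) : Prop :=
  (∀ u v, f u v = - f v u) ∧
  (∀ u v, ¬ G.Adj u v → f u v = 0) ∧
  (∀ u v, G.Adj u v → 1 ≤ ‖f u v‖ ∧ ‖f u v‖ ≤ r - 1) ∧
  (∀ v, ∑ u, f v u = 0)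

/-- `G` admits an `(r,d)`-NZF. -/
def HasNZF {V : Type} [Fintype V] (G : SimpleGraph V) (d : ℕ) (r : ℝ) : Prop :=
  ∃ f, IsNZF G d r f

/-- A graph is bridgeless if none of its edges is a bridge. -/
def Bridgeless {V : Type} (G : SimpleGraph V) : Prop :=
  ∀ e ∈ G.edgeSet, ¬ G.IsBridge e

/-- The three cube roots of unity viewed as unit vectors of `ℝ²`. -/
def cubeRoots : Set (EuclideanSpace ℝ (Fin 2)) :=
  {vec2 1 0, vec2 (-1/2) (Real.sqrt 3 / 2), vec2 (-1/2) (-(Real.sqrt 3 / 2))}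

/-! The flow `(i, j) ↦ w (i + j)` from the left to the right copy of an abelian group `A`
is conserved at every vertex as soon as `∑ a, w a = 0`, since translation permutes `A`.
Taking `A = Fin 3`, i.e. `ℤ/3`, and `w` the cube roots of unity gives the flow on `K₃,₃`. -/

section BipartiteSumFlow

variable {A E : Type*} [AddCommGroup A] [AddCommGroup E]

def bipartiteSumFlow (w : A → E) : A ⊕ A → A ⊕ A → E
  | .inl i, .inr j => w (i + j)
  | .inr j, .inl i => -w (i + j)
  | _, _ => 0

variable (w : A → E)

theorem bipartiteSumFlow_antisymm (u v : A ⊕ A) :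
    bipartiteSumFlow w u v = -bipartiteSumFlow w v u := by
  rcases u with u | u <;> rcases v with v | v <;> simp [bipartiteSumFlow]

theorem bipartiteSumFlow_eq_zero_of_not_adj {u v : A ⊕ A}
    (h : ¬ (completeBipartiteGraph A A).Adj u v) : bipartiteSumFlow w u v = 0 := by
  rcases u with u | u <;> rcases v with v | v <;> simp_all [bipartiteSumFlow]

theorem exists_bipartiteSumFlow_eq_of_adj {u v : A ⊕ A}
    (h : (completeBipartiteGraph A A).Adj u v) :
    ∃ a, bipartiteSumFlow w u v = w a ∨ bipartiteSumFlow w u v = -w a := by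
  rcases u with i | j <;> rcases v with j' | i' <;> simp_all [bipartiteSumFlow]
  · exact ⟨_, .inl rfl⟩
  · exact ⟨_, .inr rfl⟩

theorem sum_bipartiteSumFlow [Fintype A] (hw : ∑ a, w a = 0) (v : A ⊕ A) :
    ∑ u, bipartiteSumFlow w v u = 0 := by
  rw [Fintype.sum_sum_type]
  rcases v with i | j
  · simpa [bipartiteSumFlow] using Equiv.sum_comp (Equiv.addLeft i) w ▸ hw
  · simpa [bipartiteSumFlow] using Equiv.sum_comp (Equiv.addRight j) w ▸ hw

end BipartiteSumFlow

def cubeRootVec : Fin 3 → EuclideanSpace ℝ (Fin 2) :=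
  ![vec2 1 0, vec2 (-1/2) (Real.sqrt 3 / 2), vec2 (-1/2) (-(Real.sqrt 3 / 2))]

theorem norm_vec2 (x y : ℝ) : ‖vec2 x y‖ = Real.sqrt (x ^ 2 + y ^ 2) := by
  simp [EuclideanSpace.norm_eq, vec2, Fin.sum_univ_two, sq_abs]

theorem norm_cubeRootVec (k : Fin 3) : ‖cubeRootVec k‖ = 1 := by
  have h3 : Real.sqrt 3 ^ 2 = 3 := Real.sq_sqrt (by norm_num)
  fin_cases k <;> norm_num [cubeRootVec, Matrix.cons_val, norm_vec2, div_pow, h3]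

theorem cubeRootVec_mem_cubeRoots (k : Fin 3) : cubeRootVec k ∈ cubeRoots := by
  fin_cases k <;> simp [cubeRootVec, cubeRoots]

theorem sum_cubeRootVec : ∑ k, cubeRootVec k = 0 := by
  ext i
  fin_cases i <;> simp [Fin.sum_univ_three, cubeRootVec, vec2, Matrix.cons_val]; ring

/-- `K₃,₃` admits a `(2,2)`-NZF: all flow values are unit vectors; in fact one may take
all flow values (up to the sign coming from the choice of direction of each edge) among
the three cube roots of unity. -/
theorem stmt_10 :
    ∃ f, IsNZF (completeBipartiteGraph (Fin 3) (Fin 3)) 2 2 f ∧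
      ∀ u v, (completeBipartiteGraph (Fin 3) (Fin 3)).Adj u v →
        (f u v ∈ cubeRoots ∨ -f u v ∈ cubeRoots) := by
  refine ⟨bipartiteSumFlow cubeRootVec, ⟨bipartiteSumFlow_antisymm _,
    fun u v ↦ bipartiteSumFlow_eq_zero_of_not_adj _, fun u v h ↦ ?_,
    sum_bipartiteSumFlow _ sum_cubeRootVec⟩, fun u v h ↦ ?_⟩
  all_goals
    obtain ⟨k, hk | hk⟩ := exists_bipartiteSumFlow_eq_of_adj cubeRootVec h <;>
      norm_num [hk, norm_cubeRootVec, cubeRootVec_mem_cubeRoots]
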